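/- Let k ≥ 1, J a dyadic interval, and Ξ_J⁺ = {I_i⁺ : 0 ≤ i < 2k} the right halves of the non-minimal intervals in the chain Ξ_J. Then the sets in Ξ_J⁺ are pairwise disjoint and, together with [jp(J), rep(I(J))), they partition the support [jp(J), rep(J)) of μ_J^λ. -/

import Mathlib

open MeasureTheory Set

/-- The dyadic interval `[2^k m, 2^k (m+1))`. -/
noncomputable def dyadicI (k m : ℤ) : Set ℝ := Set.Ico ((2:ℝ)^k * m) ((2:ℝ)^k * (m+1))

/-- The "jumping point" of the dyadic interval `J = [2^n p, 2^n (p+1))`. -/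
noncomputable def jp (n p : ℤ) : ℝ := (2:ℝ)^n * p + (2:ℝ)^n / 3

/-- The right endpoint of the dyadic interval `J = [2^n p, 2^n (p+1))`. -/
noncomputable def rep (n p : ℤ) : ℝ := (2:ℝ)^n * (p + 1)

/-!
Every interval of the chain has `jp(J)` in its left half, and since `3 ∤ 2^m` this forces
`jp(J)` to sit exactly one third of the way through it. Hence the chain interval of length
`ℓ` has right half `[jp + ℓ/6, jp + 2ℓ/3)`, and as the lengths drop by the factor `4`,
`ℓ_i / 6 = 2 ℓ_{i+1} / 3`: the right halves are the consecutive gaps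
`[f (i+1), f i)` of the decreasing sequence `f i = jp + 2 ℓ_i / 3`, which telescope from
`f (2k) = rep(I(J))` up to `f 0 = rep(J)`.
-/

theorem Antitone.Ico_union_iUnion_Ico_succ {α : Type*} [LinearOrder α] {f : ℕ → α}
    (hf : Antitone f) {c : α} {N : ℕ} (hc : c ≤ f N) :
    Ico c (f N) ∪ ⋃ i : Fin N, Ico (f (i + 1)) (f i) = Ico c (f 0) := by
  induction N with
  | zero => simp
  | succ N ih =>
    have hstep : ⋃ i : Fin (N + 1), Ico (f (i + 1)) (f i)
        = (⋃ i : Fin N, Ico (f (i + 1)) (f i)) ∪ Ico (f (N + 1)) (f N) := by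
      ext x
      simp only [mem_iUnion, mem_union, Fin.exists_fin_succ', Fin.val_castSucc, Fin.val_last]
    rw [hstep, union_left_comm, Ico_union_Ico_eq_Ico hc (hf N.le_succ), union_comm,
      ih (hc.trans (hf N.le_succ))]

theorem volume_dyadicI (k m : ℤ) : volume (dyadicI k m) = ENNReal.ofReal ((2:ℝ)^k) := by
  rw [dyadicI, Real.volume_Ico]
  ring_nf

theorem eq_add_two_of_volume_dyadicI_eq_four_mul {k m k' m' : ℤ}
    (h : volume (dyadicI k m) = 4 * volume (dyadicI k' m')) : k = k' + 2 := by
  rw [volume_dyadicI, volume_dyadicI, ← ENNReal.ofReal_ofNat, ← ENNReal.ofReal_mul (by norm_num),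
    ENNReal.ofReal_eq_ofReal_iff (by positivity) (by positivity)] at h
  refine zpow_right_injective₀ (by norm_num : (0:ℝ) < 2) (by norm_num) ?_
  change (2:ℝ)^k = 2^(k' + 2)
  rw [h, zpow_add₀ two_ne_zero]
  ring

theorem three_mul_add_two_pow_ne_zero (d : ℤ) (m : ℕ) : 3 * d + 2 ^ m ≠ 0 := by
  intro h
  have h3 : (3:ℤ) ∣ 2 ^ m := ⟨-d, by linarith⟩
  have h32 := Int.prime_three.dvd_of_dvd_pow h3
  norm_num at h32

theorem jp_eq_add_third_of_mem_left_half {n p k m : ℤ} (hk : k ≤ n)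
    (h : jp n p ∈ dyadicI (k - 1) (2 * m)) : jp n p = (2:ℝ)^k * m + (2:ℝ)^k / 3 := by
  obtain ⟨e, rfl⟩ := Int.le.dest hk
  obtain ⟨h1, h2⟩ := h
  have h2k : (0:ℝ) < (2:ℝ)^k := by positivity
  simp only [jp, zpow_add₀ (two_ne_zero' ℝ), zpow_sub_one₀ (two_ne_zero' ℝ), zpow_natCast]
    at h1 h2 ⊢
  push_cast at h1 h2
  set N : ℤ := 3 * (2 ^ e * p - m) + 2 ^ e with hN
  have hNr : (N:ℝ) = 3 * ((2:ℝ)^e * p - m) + (2:ℝ)^e := by push_cast [hN]; ring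
  -- `h1`, `h2` say `0 ≤ N < 3/2` after dividing by `2^k / 3`
  have hN0 : (0:ℝ) ≤ N := by
    rw [hNr]
    nlinarith
  have hN2 : (N:ℝ) < 2 := by
    rw [hNr]
    nlinarith
  have hN1 : N = 1 := by
    have hN_ne : N ≠ 0 := three_mul_add_two_pow_ne_zero (2 ^ e * p - m) e
    have hN0' : 0 ≤ N := by exact_mod_cast hN0
    have hN2' : N < 2 := by exact_mod_cast hN2
    omega
  have hN1' : (N:ℝ) = 1 := by exact_mod_cast hN1
  rw [hNr] at hN1'
  linear_combination ((2:ℝ)^k / 3) * hN1'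

theorem dyadicI_right_half_eq_of_jp_mem_left_half {n p k m : ℤ} (hk : k ≤ n)
    (h : jp n p ∈ dyadicI (k - 1) (2 * m)) :
    dyadicI (k - 1) (2 * m + 1) = Ico (jp n p + (2:ℝ)^k / 6) (jp n p + 2 * (2:ℝ)^k / 3) := by
  rw [jp_eq_add_third_of_mem_left_half hk h, dyadicI, zpow_sub_one₀ (two_ne_zero' ℝ)]
  push_cast
  ring_nf

theorem rep_eq_of_jp_mem_left_half {n p k m : ℤ} (hk : k ≤ n)
    (h : jp n p ∈ dyadicI (k - 1) (2 * m)) : rep k m = jp n p + 2 * (2:ℝ)^k / 3 := by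
  rw [jp_eq_add_third_of_mem_left_half hk h, rep]
  ring

theorem stmt7_general (k : ℕ) (n p : ℤ)
    (c : Fin (2*k+1) → ℤ × ℤ)
    (h0 : c 0 = (n, p))
    (hjp : ∀ i, jp n p ∈ dyadicI ((c i).1 - 1) (2 * (c i).2))
    (hlen : ∀ i : Fin (2*k),
      volume (dyadicI (c i.castSucc).1 (c i.castSucc).2)
        = 4 * volume (dyadicI (c i.succ).1 (c i.succ).2)) :
    (∀ i j : Fin (2*k), i ≠ j →
      Disjoint (dyadicI ((c i.castSucc).1 - 1) (2 * (c i.castSucc).2 + 1))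
               (dyadicI ((c j.castSucc).1 - 1) (2 * (c j.castSucc).2 + 1))) ∧
    (∀ i : Fin (2*k),
      Disjoint (Set.Ico (jp n p) (rep (c (Fin.last (2*k))).1 (c (Fin.last (2*k))).2))
               (dyadicI ((c i.castSucc).1 - 1) (2 * (c i.castSucc).2 + 1))) ∧
    (Set.Ico (jp n p) (rep (c (Fin.last (2*k))).1 (c (Fin.last (2*k))).2)
        ∪ ⋃ i : Fin (2*k), dyadicI ((c i.castSucc).1 - 1) (2 * (c i.castSucc).2 + 1))
      = Set.Ico (jp n p) (rep n p) := by
  have hscale : ∀ i, (c i).1 = n - 2 * (i : ℕ) := by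
    refine Fin.induction (by simp [h0]) fun i ih => ?_
    rw [eq_add_two_of_volume_dyadicI_eq_four_mul (hlen i), Fin.val_castSucc] at ih
    rw [Fin.val_succ]
    push_cast
    linarith
  have hle : ∀ i, (c i).1 ≤ n := fun i => by rw [hscale i]; omega
  set f : ℕ → ℝ := fun i => jp n p + 2 * (2:ℝ)^(n - 2 * (i : ℤ)) / 3 with hf_def
  have hf : Antitone f := antitone_nat_of_succ_le fun i => by
    simp only [hf_def]
    gcongr <;> norm_num
  have hpiece : ∀ i : Fin (2*k),
      dyadicI ((c i.castSucc).1 - 1) (2 * (c i.castSucc).2 + 1) = Ico (f (i + 1)) (f i) := by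
    intro i
    rw [dyadicI_right_half_eq_of_jp_mem_left_half (hle _) (hjp _), hscale, Fin.val_castSucc]
    simp only [hf_def]
    rw [Nat.cast_succ, mul_add_one, ← sub_sub, zpow_sub₀ (two_ne_zero' ℝ) _ 2]
    ring_nf
  have hlast : rep (c (Fin.last (2*k))).1 (c (Fin.last (2*k))).2 = f (2 * k) := by
    rw [rep_eq_of_jp_mem_left_half (hle _) (hjp _), hscale, Fin.val_last]
  have hfirst : rep n p = f 0 := by
    simp only [hf_def, rep, jp]
    ring_nf
  simp only [hpiece, hlast, hfirst]
  refine ⟨fun i j hij => hf.pairwise_disjoint_on_Ico_succ (Fin.val_injective.ne hij),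
    fun i => disjoint_left.2 fun x hx hx' => (hx.2.trans_le (hf i.isLt)).not_ge hx'.1,
    hf.Ico_union_iUnion_Ico_succ ?_⟩
  simp only [hf_def]
  linarith [zpow_pos (two_pos (α := ℝ)) (n - 2 * ((2 * k : ℕ) : ℤ))]

/-- The sets of `Ξ_J⁺` (the right halves of the non-minimal chain intervals; the right
half of `dyadicI a b` is `dyadicI (a-1) (2b+1)`) are pairwise disjoint and, together with
`[jp(J), rep(I(J)))`, partition the support `[jp(J), rep(J))` of `μ_J^λ`. -/
theorem stmt7 (k : ℕ) (hk : 1 ≤ k) (n p : ℤ)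
    (c : Fin (2*k+1) → ℤ × ℤ)
    (h0 : c 0 = (n, p))
    (hjp : ∀ i, jp n p ∈ dyadicI ((c i).1 - 1) (2 * (c i).2))
    (hnest : ∀ i : Fin (2*k),
      dyadicI (c i.succ).1 (c i.succ).2 ⊆ dyadicI (c i.castSucc).1 (c i.castSucc).2)
    (hlen : ∀ i : Fin (2*k),
      volume (dyadicI (c i.castSucc).1 (c i.castSucc).2)
        = 4 * volume (dyadicI (c i.succ).1 (c i.succ).2)) :
    (∀ i j : Fin (2*k), i ≠ j →
      Disjoint (dyadicI ((c i.castSucc).1 - 1) (2 * (c i.castSucc).2 + 1))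
               (dyadicI ((c j.castSucc).1 - 1) (2 * (c j.castSucc).2 + 1))) ∧
    (∀ i : Fin (2*k),
      Disjoint (Set.Ico (jp n p) (rep (c (Fin.last (2*k))).1 (c (Fin.last (2*k))).2))
               (dyadicI ((c i.castSucc).1 - 1) (2 * (c i.castSucc).2 + 1))) ∧
    (Set.Ico (jp n p) (rep (c (Fin.last (2*k))).1 (c (Fin.last (2*k))).2)
        ∪ ⋃ i : Fin (2*k), dyadicI ((c i.castSucc).1 - 1) (2 * (c i.castSucc).2 + 1))
      = Set.Ico (jp n p) (rep n p) :=
  stmt7_general k n p c h0 hjp hlen
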